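/- arXiv:1201.5181 — 8 statements merged into one kernel-verified Lean document; each statement's English description precedes it below -/
import Mathlib

section
/- If a topological space X satisfies the well-ordered (F) condition, then to each point x ∈ X and open set U containing x one can assign an open set H(x,U) containing x, and to each point a ∈ H(x,U) an ordinal n(a,x,U), such that whenever a ∈ H(x,U) ∩ H(y,V) and n(a,x,U) ≤ n(a,y,V), then y ∈ U. -/
open Set Topology

/-- The core (F) condition for a family `W` assigning to each point a collection of subsets. -/
def FFamilyCondition {X : Type*} [TopologicalSpace X] (W : X → Set (Set X)) : Prop :=
  (∀ x, ∀ w ∈ W x, x ∈ w) ∧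
  ∀ x U, IsOpen U → x ∈ U → ∃ V, IsOpen V ∧ x ∈ V ∧
    ∀ y ∈ V, ∃ w ∈ W y, x ∈ w ∧ w ⊆ U

/-- `X` satisfies well-ordered (F): each `W x` is well-ordered by reverse inclusion. -/
def SatisfiesWellOrderedF (X : Type*) [TopologicalSpace X] : Prop :=
  ∃ W : X → Set (Set X),
    (∀ x, IsWellOrder (W x) (fun A B => (B : Set X) ⊂ (A : Set X))) ∧
    FFamilyCondition W

/-- `X` satisfies chain (F): each `W x` is linearly ordered by (reverse) inclusion. -/
def SatisfiesChainF (X : Type*) [TopologicalSpace X] : Prop :=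
  ∃ W : X → Set (Set X),
    (∀ x, IsChain (· ⊆ ·) (W x)) ∧
    FFamilyCondition W

/-- `X` satisfies decreasing (G). -/
def SatisfiesDecreasingG (X : Type*) [TopologicalSpace X] : Prop :=
  ∃ W : X → ℕ → Set X,
    (∀ x k, x ∈ W x k) ∧ (∀ x k, W x (k + 1) ⊆ W x k) ∧
    ∀ x U, IsOpen U → x ∈ U → ∃ V, IsOpen V ∧ x ∈ V ∧
      ∀ y ∈ V, ∃ m, x ∈ W y m ∧ W y m ⊆ U

universe u_hn

/-- The `H`/`n` characterization with ordinal-valued `n`. -/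
def HNAssignment (X : Type u_hn) [TopologicalSpace X] : Prop :=
  ∃ (H : X → Set X → Set X) (n : X → X → Set X → Ordinal.{u_hn}),
    (∀ x U, IsOpen U → x ∈ U → IsOpen (H x U) ∧ x ∈ H x U) ∧
    (∀ a x y U V, IsOpen U → x ∈ U → IsOpen V → y ∈ V →
      a ∈ H x U → a ∈ H y V → n a x U ≤ n a y V → y ∈ U)

/-- `X` is a D-space: every neighborhood assignment has a closed discrete kernel. -/
def IsDSpace (X : Type*) [TopologicalSpace X] : Prop :=
  ∀ φ : X → Set X, (∀ x, IsOpen (φ x)) → (∀ x, x ∈ φ x) →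
    ∃ D : Set X, IsClosed D ∧ DiscreteTopology D ∧ ⋃ d ∈ D, φ d = Set.univ

/-!
Let `n(a, x, U)` be the least position, in the well-order of `W(a)` by reverse inclusion, of a
member `w` with `x ∈ w ⊆ U`, and let `H(x, U)` be the open set `V(x, U)` of the (F) condition, so
that such members exist for every `a ∈ H(x, U)`. If `n(a, x, U) ≤ n(a, y, V)` then the member
realising `n(a, y, V)` comes no earlier and is therefore contained in the one realising
`n(a, x, U)`; hence `y` lies in a member contained in `U`.
-/

universe u

section ReverseInclusion

variable {X : Type u} {S : Set (Set X)} [IsWellOrder S (fun A B => (B : Set X) ⊂ A)]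

noncomputable def reverseInclusionRank (w : S) : Ordinal.{u} :=
  Ordinal.typein (fun A B : S => (B : Set X) ⊂ A) w

theorem subset_of_reverseInclusionRank_le {v w : S}
    (h : reverseInclusionRank v ≤ reverseInclusionRank w) : (w : Set X) ⊆ v := by
  rcases trichotomous_of (fun A B : S => (B : Set X) ⊂ A) v w with hvw | rfl | hwv
  · exact hvw.subset
  · exact subset_rfl
  · exact absurd ((Ordinal.typein_lt_typein (fun A B : S => (B : Set X) ⊂ A)).2 hwv) h.not_gt

variable (S) in
noncomputable def leastReverseInclusionRank (P : Set X → Prop) : Ordinal.{u} :=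
  sInf (reverseInclusionRank '' {w : S | P w})

theorem exists_reverseInclusionRank_eq_least {P : Set X → Prop} (h : ∃ w ∈ S, P w) :
    ∃ w : S, P w ∧ reverseInclusionRank w = leastReverseInclusionRank S P := by
  obtain ⟨w, hwS, hw⟩ := h
  exact csInf_mem (Set.Nonempty.image _ ⟨⟨w, hwS⟩, hw⟩)

theorem mem_of_leastReverseInclusionRank_le {x y : X} {U V : Set X}
    (hx : ∃ w ∈ S, x ∈ w ∧ w ⊆ U) (hy : ∃ w ∈ S, y ∈ w ∧ w ⊆ V)
    (h : leastReverseInclusionRank S (fun w => x ∈ w ∧ w ⊆ U) ≤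
      leastReverseInclusionRank S (fun w => y ∈ w ∧ w ⊆ V)) :
    y ∈ U := by
  obtain ⟨v, ⟨-, hvU⟩, hv⟩ := exists_reverseInclusionRank_eq_least hx
  obtain ⟨w, ⟨hyw, -⟩, hw⟩ := exists_reverseInclusionRank_eq_least hy
  exact hvU (subset_of_reverseInclusionRank_le (hv.trans_le (h.trans_eq hw.symm)) hyw)

end ReverseInclusion

theorem stmt0_general {X : Type*} [TopologicalSpace X]
    (h : SatisfiesWellOrderedF X) : HNAssignment X := by
  obtain ⟨W, hwo, -, hF⟩ := h
  choose! V hVopen hxV hV using hF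
  refine ⟨V, fun a x U => haveI := hwo a; leastReverseInclusionRank (W a) fun w => x ∈ w ∧ w ⊆ U,
    fun x U hU hx => ⟨hVopen x U hU hx, hxV x U hU hx⟩, ?_⟩
  intro a x y U U' hU hx hU' hy haU haU' hle
  have := hwo a
  exact mem_of_leastReverseInclusionRank_le (hV x U hU hx a haU) (hV y U' hU' hy a haU') hle

theorem stmt0 {X : Type*} [TopologicalSpace X] [T1Space X]
    (h : SatisfiesWellOrderedF X) : HNAssignment X :=
  stmt0_general h
end

section
/- If to each point x of a T₁ space X and each open set U containing x one can assign an open set H(x,U) containing x, and to each a ∈ H(x,U) an ordinal n(a,x,U), such that a ∈ H(x,U) ∩ H(y,V) and n(a,x,U) ≤ n(a,y,V) imply y ∈ U, then X satisfies the well-ordered (F) condition. -/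
open Set Topology

universe u_hn

/-!
Put `W(α, a) = {a} ∪ {y | a ∈ H(y, V) and α ≤ n(a, y, V) for some open V ∋ y}`. These sets decrease
in `α`, so the family `{W(α, a)}_α` is well-ordered by reverse inclusion. Given `x ∈ U`, take
`V = H(x, U) ∩ U`: for `y ∈ V` the set `W(n(y, x, U), y)` contains `x`, and each of its points `z ≠ y`
satisfies `y ∈ H(x, U) ∩ H(z, V')` with `n(y, x, U) ≤ n(y, z, V')`, whence `z ∈ U`.
-/

/-- Choosing preimages embeds `range f`, ordered by reverse inclusion, into `α`. -/
theorem isWellOrder_ssuperset_range_of_antitone {α X : Type*} [LinearOrder α] [WellFoundedLT α]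
    {f : α → Set X} (hf : Antitone f) :
    IsWellOrder (range f) (fun A B => (B : Set X) ⊂ (A : Set X)) := by
  set g := rangeSplitting f
  have hg : ∀ A, f (g A) = A := apply_rangeSplitting f
  let e : (fun A B : range f => (B : Set X) ⊂ (A : Set X)) ↪r ((· < ·) : α → α → Prop) :=
    { toFun := g
      inj' := fun A B hAB => Subtype.ext (by rw [← hg A, ← hg B, hAB])
      map_rel_iff' := fun {A B} => by
        refine ⟨fun hlt => ?_, fun hBA => lt_of_not_ge fun hle => hBA.2 ?_⟩
        · have hBA : (B : Set X) ⊆ A := by rw [← hg A, ← hg B]; exact hf hlt.le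
          exact hBA.ssubset_of_ne fun h => hlt.ne (congrArg g (Subtype.ext h.symm))
        · rw [← hg A, ← hg B]; exact hf hle }
  exact e.isWellOrder

section HNAssignment

variable {X ι : Type*} [TopologicalSpace X] [Preorder ι]
  (H : X → Set X → Set X) (n : X → X → Set X → ι)

def hnLevelSet (a : X) (α : ι) : Set X :=
  insert a {y | ∃ V, IsOpen V ∧ y ∈ V ∧ a ∈ H y V ∧ α ≤ n a y V}

theorem antitone_hnLevelSet (a : X) : Antitone (hnLevelSet H n a) := by
  rintro α β hαβ y (rfl | ⟨V, hV, hyV, haH, hβ⟩)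
  · exact mem_insert y _
  · exact Or.inr ⟨V, hV, hyV, haH, hαβ.trans hβ⟩

theorem fFamilyCondition_range_hnLevelSet
    (hH : ∀ x U, IsOpen U → x ∈ U → IsOpen (H x U) ∧ x ∈ H x U)
    (hn : ∀ a x y U V, IsOpen U → x ∈ U → IsOpen V → y ∈ V →
      a ∈ H x U → a ∈ H y V → n a x U ≤ n a y V → y ∈ U) :
    FFamilyCondition fun a => range (hnLevelSet H n a) := by
  refine ⟨fun a => forall_mem_range.2 fun α => mem_insert a _, fun x U hU hxU => ?_⟩
  obtain ⟨hHopen, hxH⟩ := hH x U hU hxU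
  refine ⟨H x U ∩ U, hHopen.inter hU, ⟨hxH, hxU⟩, fun y ⟨hyH, hyU⟩ => ?_⟩
  refine ⟨hnLevelSet H n y (n y x U), mem_range_self _, Or.inr ⟨U, hU, hxU, hyH, le_rfl⟩, ?_⟩
  rintro z (rfl | ⟨V, hV, hzV, hyHz, hle⟩)
  · exact hyU
  · exact hn y x z U V hU hxU hV hzV hyH hyHz hle

end HNAssignment

theorem stmt1_general {X : Type*} [TopologicalSpace X]
    (h : HNAssignment X) : SatisfiesWellOrderedF X := by
  obtain ⟨H, n, hH, hn⟩ := h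
  exact ⟨fun a => range (hnLevelSet H n a),
    fun a => isWellOrder_ssuperset_range_of_antitone (antitone_hnLevelSet H n a),
    fFamilyCondition_range_hnLevelSet H n hH hn⟩

theorem stmt1 {X : Type*} [TopologicalSpace X] [T1Space X]
    (h : HNAssignment X) : SatisfiesWellOrderedF X :=
  stmt1_general h
end

section
/- Every T₁ topological space satisfying the well-ordered (F) condition is a D-space. -/
open Set Topology

universe u_hn

/-!
Given a neighborhood assignment `φ`, pick points `x_σ` by transfinite recursion, each outside
`⋃_{τ<σ} φ x_τ`. At a successor stage `σ + 1` the point `x_σ` is *served*: among the members of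
`W x_σ` lying in `φ y` for some uncovered `y`, the well-order provides a largest one, and a `y`
witnessing it is the next point. Fix `z` and let `x_{σ₀}` be the first point with `z ∈ φ x_{σ₀}`;
the (F) condition gives an open `V ∋ z` such that each `y ∈ V` has some `w ∈ W y` with
`z ∈ w ⊆ φ z`. If `x_σ ∈ V` with `σ < σ₀`, the set served at stage `σ + 1` contains that `w`,
hence `z`, so `σ + 1 = σ₀`. Thus `V ∩ φ x_{σ₀}` meets the chosen points in at most two of them.
The points are distinct as long as `X` is not covered, and the ordinals do not form a set, so the
recursion does cover `X`.
-/

universe u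

theorem exists_isGreatest_of_isWellOrder_ssuperset {X : Type*} {s : Set (Set X)}
    (hs : IsWellOrder s (fun A B => (B : Set X) ⊂ A)) {S : Set (Set X)} (hSs : S ⊆ s)
    (hS : S.Nonempty) : ∃ m, IsGreatest S m := by
  obtain ⟨w₀, hw₀⟩ := hS
  obtain ⟨m, hmS, hmin⟩ := hs.wf.has_min {w : s | (w : Set X) ∈ S} ⟨⟨w₀, hSs hw₀⟩, hw₀⟩
  refine ⟨m, hmS, fun w hw => ?_⟩
  have := hs
  rcases trichotomous_of (fun A B : s => (B : Set X) ⊂ A) m ⟨w, hSs hw⟩ with h | h | h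
  · exact h.subset
  · rw [h]
  · exact absurd h (hmin ⟨w, hSs hw⟩ hw)

theorem isClosed_and_isDiscrete_of_finite_inter {X : Type*} [TopologicalSpace X] [T1Space X]
    {D : Set X} (h : ∀ z, ∃ t ∈ 𝓝 z, (t ∩ D).Finite) : IsClosed D ∧ IsDiscrete D := by
  rw [← compl_mem_codiscrete_iff, Filter.codiscrete,
    codiscreteWithin_iff_locallyFiniteComplementWithin]
  simpa using h

section GreedySequence

variable {X : Type u} (φ : X → Set X) (W : X → Set (Set X))

def Serves (a : X) (O : Set X) (y : X) : Prop :=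
  y ∉ O ∧ ∀ w ∈ W a, ∀ z ∉ O, w ⊆ φ z → w ⊆ φ y

theorem exists_serves {a : X} (ha : IsWellOrder (W a) (fun A B => (B : Set X) ⊂ A))
    {O : Set X} (hO : O ≠ univ) : ∃ y, Serves φ W a O y := by
  obtain ⟨z, hz⟩ := (ne_univ_iff_exists_notMem O).1 hO
  by_cases hS : {w ∈ W a | ∃ z ∉ O, w ⊆ φ z}.Nonempty
  · obtain ⟨m, ⟨-, y, hy, hmy⟩, hm⟩ :=
      exists_isGreatest_of_isWellOrder_ssuperset ha (sep_subset _ _) hS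
    exact ⟨y, hy, fun w hw z hz hwz => (hm ⟨hw, z, hz, hwz⟩).trans hmy⟩
  · exact ⟨z, hz, fun w hw z' hz' hwz => absurd ⟨w, hw, z', hz', hwz⟩ hS⟩

variable [Nonempty X]

/-- `Ordinal.pred σ < σ` holds exactly at successor stages; at `0` and at limits `pred σ = σ`. -/
noncomputable def greedyStep (σ : Ordinal.{u}) (prev : ∀ τ < σ, X) : X :=
  if h : σ.pred < σ then
    Classical.epsilon (Serves φ W (prev σ.pred h) (⋃ τ, ⋃ hτ : τ < σ, φ (prev τ hτ)))
  else Classical.epsilon (· ∉ ⋃ τ, ⋃ hτ : τ < σ, φ (prev τ hτ))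

noncomputable def greedySeq : Ordinal.{u} → X :=
  Ordinal.lt_wf.fix (greedyStep φ W)

def coveredBefore (σ : Ordinal.{u}) : Set X :=
  ⋃ τ < σ, φ (greedySeq φ W τ)

def greedyKernel : Set X :=
  greedySeq φ W '' {σ | coveredBefore φ W σ ≠ univ}

theorem greedySeq_eq (σ : Ordinal.{u}) :
    greedySeq φ W σ = greedyStep φ W σ (fun τ _ => greedySeq φ W τ) :=
  WellFounded.fix_eq _ _ _

theorem coveredBefore_mono : Monotone (coveredBefore φ W) :=
  fun _ _ h => biUnion_mono (fun _ hτ => lt_of_lt_of_le hτ h) fun _ _ => subset_rfl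

variable {φ W} (hW : ∀ x, IsWellOrder (W x) (fun A B => (B : Set X) ⊂ A))
include hW

theorem greedySeq_notMem_coveredBefore {σ : Ordinal.{u}} (hσ : coveredBefore φ W σ ≠ univ) :
    greedySeq φ W σ ∉ coveredBefore φ W σ := by
  rw [greedySeq_eq, greedyStep]
  split_ifs
  · exact (Classical.epsilon_spec (exists_serves φ W (hW _) hσ)).1
  · exact Classical.epsilon_spec ((ne_univ_iff_exists_notMem _).1 hσ)

theorem mem_greedySeq_add_one {τ : Ordinal.{u}} {z : X} (hz : z ∉ coveredBefore φ W (τ + 1))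
    {w : Set X} (hw : w ∈ W (greedySeq φ W τ)) (hzw : z ∈ w) (hwz : w ⊆ φ z) :
    z ∈ φ (greedySeq φ W (τ + 1)) := by
  have hτ : (τ + 1).pred < τ + 1 := by simp
  rw [greedySeq_eq, greedyStep, dif_pos hτ]
  simp only [Ordinal.pred_add_one]
  exact (Classical.epsilon_spec (exists_serves φ W (hW _) (ne_univ_iff_exists_notMem _ |>.2
    ⟨z, hz⟩))).2 w hw z hz hwz hzw

theorem le_of_greedySeq_mem {σ ρ : Ordinal.{u}} (hσ : coveredBefore φ W σ ≠ univ)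
    (h : greedySeq φ W σ ∈ φ (greedySeq φ W ρ)) : σ ≤ ρ :=
  le_of_not_gt fun hρ => greedySeq_notMem_coveredBefore hW hσ (mem_biUnion hρ h)

theorem add_one_eq_of_notMem_coveredBefore {σ σ₀ : Ordinal.{u}} {z : X}
    (hz : z ∉ coveredBefore φ W σ₀) (hσ : σ < σ₀) {w : Set X} (hw : w ∈ W (greedySeq φ W σ))
    (hzw : z ∈ w) (hwz : w ⊆ φ z) : σ + 1 = σ₀ := by
  have hle : σ + 1 ≤ σ₀ := Order.add_one_le_of_lt hσ
  refine hle.eq_of_not_lt fun hlt => hz (mem_biUnion hlt ?_)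
  exact mem_greedySeq_add_one hW (fun h => hz (coveredBefore_mono φ W hle h)) hw hzw hwz

variable (hφ : ∀ x, x ∈ φ x)
include hφ

theorem exists_mem_greedySeq (z : X) : ∃ σ, z ∈ φ (greedySeq φ W σ) := by
  by_contra! hz
  have hne : ∀ σ, coveredBefore φ W σ ≠ univ := fun σ h =>
    (mem_iUnion₂.1 (h.symm ▸ mem_univ z)).elim fun τ ⟨_, hτ⟩ => hz τ hτ
  have hinj : Function.Injective (greedySeq φ W) := .of_lt_imp_ne fun σ τ hστ h =>
    greedySeq_notMem_coveredBefore hW (hne τ) (h ▸ mem_biUnion hστ (hφ _))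
  exact not_small_ordinal.{u, u} (small_of_injective hinj)

theorem exists_first_mem_greedySeq (z : X) :
    ∃ σ, z ∈ φ (greedySeq φ W σ) ∧ z ∉ coveredBefore φ W σ := by
  obtain ⟨σ, hσ, hmin⟩ :=
    Ordinal.lt_wf.has_min {σ | z ∈ φ (greedySeq φ W σ)} (exists_mem_greedySeq hW hφ z)
  refine ⟨σ, hσ, fun hz => ?_⟩
  obtain ⟨τ, hτ, hzτ⟩ := mem_iUnion₂.1 hz
  exact hmin τ hzτ hτ

theorem iUnion_greedyKernel : ⋃ d ∈ greedyKernel φ W, φ d = univ := by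
  refine eq_univ_of_forall fun z => ?_
  obtain ⟨σ, hzσ, hz⟩ := exists_first_mem_greedySeq hW hφ z
  exact mem_biUnion (mem_image_of_mem _ (ne_univ_iff_exists_notMem _ |>.2 ⟨z, hz⟩)) hzσ

theorem finite_inter_greedyKernel [TopologicalSpace X] (hF : FFamilyCondition W)
    (hφo : ∀ x, IsOpen (φ x)) (z : X) : ∃ t ∈ 𝓝 z, (t ∩ greedyKernel φ W).Finite := by
  obtain ⟨σ₀, hzσ₀, hz⟩ := exists_first_mem_greedySeq hW hφ z
  obtain ⟨V, hVo, hzV, hV⟩ := hF.2 z (φ z) (hφo z) (hφ z)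
  refine ⟨V ∩ φ (greedySeq φ W σ₀),
    Filter.inter_mem (hVo.mem_nhds hzV) ((hφo _).mem_nhds hzσ₀), ?_⟩
  refine (toFinite {greedySeq φ W σ₀, greedySeq φ W σ₀.pred}).subset ?_
  rintro _ ⟨⟨hdV, hdσ₀⟩, σ, hσ, rfl⟩
  rcases (le_of_greedySeq_mem hW hσ hdσ₀).eq_or_lt with rfl | hlt
  · exact mem_insert _ _
  · obtain ⟨w, hw, hzw, hwz⟩ := hV _ hdV
    have hσ₀ : σ + 1 = σ₀ := add_one_eq_of_notMem_coveredBefore hW hz hlt hw hzw hwz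
    exact mem_insert_of_mem _ (by rw [← hσ₀, Ordinal.pred_add_one]; exact mem_singleton _)

end GreedySequence

theorem stmt2 {X : Type*} [TopologicalSpace X] [T1Space X]
    (h : SatisfiesWellOrderedF X) : IsDSpace X := by
  obtain ⟨W, hW, hF⟩ := h
  intro φ hφo hφ
  cases isEmpty_or_nonempty X
  · exact ⟨∅, isClosed_empty, inferInstance, by simp [eq_empty_of_isEmpty]⟩
  obtain ⟨hD, hDd⟩ :=
    isClosed_and_isDiscrete_of_finite_inter (finite_inter_greedyKernel hW hφ hF hφo)
  exact ⟨_, hD, hDd.to_subtype, iUnion_greedyKernel hW hφ⟩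
end

section
/- Suppose X is a T₁ space with assignments H and n as in the well-ordered (F) characterization (H(x,U) open containing x, n(a,x,U) an ordinal, and a ∈ H(x,U) ∩ H(y,V) with n(a,x,U) ≤ n(a,y,V) implies y ∈ U). Let φ be a neighborhood assignment, let x₀ ∈ X, and let C(x₀) = {y ∈ X \ φ(x₀) : x₀ ∈ H(y, φ(y))}. If C(x₀) is nonempty, then there exists y₀ ∈ C(x₀) such that C(x₀) ⊆ φ(y₀). -/
open Set Topology

universe u_hn

theorem stmt3 {X : Type u_hn} [TopologicalSpace X] [T1Space X]
    (H : X → Set X → Set X) (n : X → X → Set X → Ordinal.{u_hn})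
    (hH : ∀ x U, IsOpen U → x ∈ U → IsOpen (H x U) ∧ x ∈ H x U)
    (hn : ∀ a x y U V, IsOpen U → x ∈ U → IsOpen V → y ∈ V →
      a ∈ H x U → a ∈ H y V → n a x U ≤ n a y V → y ∈ U)
    (φ : X → Set X) (hφo : ∀ x, IsOpen (φ x)) (hφm : ∀ x, x ∈ φ x)
    (x₀ : X)
    (hC : {y | y ∉ φ x₀ ∧ x₀ ∈ H y (φ y)}.Nonempty) :
    ∃ y₀ ∈ {y | y ∉ φ x₀ ∧ x₀ ∈ H y (φ y)},
      {y | y ∉ φ x₀ ∧ x₀ ∈ H y (φ y)} ⊆ φ y₀ := by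
  set C := {y | y ∉ φ x₀ ∧ x₀ ∈ H y (φ y)} with hCdef
  have hne : ((fun y => n x₀ y (φ y)) '' C).Nonempty := hC.image _
  obtain ⟨o, ⟨y₀, hy₀C, rfl⟩, hmin⟩ := Ordinal.lt_wf.has_min _ hne
  refine ⟨y₀, hy₀C, fun y hyC => ?_⟩
  have hle : n x₀ y₀ (φ y₀) ≤ n x₀ y (φ y) := by
    by_contra h
    exact hmin _ ⟨y, hyC, rfl⟩ (lt_of_not_ge h)
  exact hn x₀ y₀ y (φ y₀) (φ y) (hφo y₀) (hφm y₀) (hφo y) (hφm y) hy₀C.2 hyC.2 hle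
end

section
/- A T₁ space satisfies the decreasing (G) condition if and only if to each point x ∈ X and open set U containing x one can assign an open set H(x,U) containing x, and to each a ∈ H(x,U) a natural number n(a,x,U), such that whenever a ∈ H(x,U) ∩ H(y,V) and n(a,x,U) ≤ n(a,y,V), then y ∈ U. -/
/-!
Given decreasing (G) witnesses `W`, take `H x U := V(x,U)` and let `n a x U` be the least `m` with
`x ∈ W a m ⊆ U`; if `n a x U ≤ n a y V` then `y ∈ W a (n a y V) ⊆ W a (n a x U) ⊆ U` because `W a`
is decreasing. Conversely, from `H` and `n` put
`W a m := ⋂ {U open | ∃ y ∈ U, a ∈ H y U ∩ U ∧ n a y U ≤ m}`,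
which is decreasing in `m`, and take `V(x,U) := H x U ∩ U` with `m := n a x U`.
-/

open Set Topology

universe u_hn

section

variable {X : Type*} [TopologicalSpace X]

theorem exists_hn_of_satisfiesDecreasingG (hG : SatisfiesDecreasingG X) :
    ∃ (H : X → Set X → Set X) (n : X → X → Set X → ℕ),
      (∀ x U, IsOpen U → x ∈ U → IsOpen (H x U) ∧ x ∈ H x U) ∧
      (∀ a x y U V, IsOpen U → x ∈ U → IsOpen V → y ∈ V →
        a ∈ H x U → a ∈ H y V → n a x U ≤ n a y V → y ∈ U) := by
  obtain ⟨W, -, hW_succ, hW⟩ := hG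
  have hW_anti : ∀ a, Antitone (W a) := fun a => antitone_nat_of_succ_le (hW_succ a)
  have hV : ∀ x U, ∃ V, IsOpen U → x ∈ U →
      IsOpen V ∧ x ∈ V ∧ ∀ a ∈ V, ∃ m, x ∈ W a m ∧ W a m ⊆ U := by
    intro x U
    by_cases hxU : IsOpen U ∧ x ∈ U
    · obtain ⟨V, hV⟩ := hW x U hxU.1 hxU.2
      exact ⟨V, fun _ _ => hV⟩
    · exact ⟨∅, fun hU hx => absurd ⟨hU, hx⟩ hxU⟩
  choose H hH using hV
  refine ⟨H, fun a x U => sInf {m | x ∈ W a m ∧ W a m ⊆ U},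
    fun x U hU hx => ⟨(hH x U hU hx).1, (hH x U hU hx).2.1⟩, ?_⟩
  intro a x y U V hU hx hV hy haU haV hle
  have hxm := Nat.sInf_mem ((hH x U hU hx).2.2 a haU)
  have hym := Nat.sInf_mem ((hH y V hV hy).2.2 a haV)
  exact hxm.2 (hW_anti a hle hym.1)

def hnFamily (H : X → Set X → Set X) (n : X → X → Set X → ℕ) (a : X) (m : ℕ) : Set X :=
  {z | ∀ y U, IsOpen U → y ∈ U → a ∈ H y U → a ∈ U → n a y U ≤ m → z ∈ U}

theorem satisfiesDecreasingG_of_hn (H : X → Set X → Set X) (n : X → X → Set X → ℕ)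
    (hH : ∀ x U, IsOpen U → x ∈ U → IsOpen (H x U) ∧ x ∈ H x U)
    (hn : ∀ a x y U V, IsOpen U → x ∈ U → IsOpen V → y ∈ V →
      a ∈ H x U → a ∈ H y V → n a x U ≤ n a y V → y ∈ U) :
    SatisfiesDecreasingG X := by
  refine ⟨hnFamily H n, fun a m y U _ _ _ haU _ => haU,
    fun a m z hz y U hU hy haH haU hle => hz y U hU hy haH haU (hle.trans m.le_succ), ?_⟩
  intro x U hU hx
  refine ⟨H x U ∩ U, (hH x U hU hx).1.inter hU, ⟨(hH x U hU hx).2, hx⟩, ?_⟩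
  rintro a ⟨haH, haU⟩
  exact ⟨n a x U, fun y U' hU' hy haH' _ hle => hn a y x U' U hU' hy hU hx haH' haH hle,
    fun z hz => hz x U hU hx haH haU le_rfl⟩

end

theorem stmt5_general {X : Type*} [TopologicalSpace X] :
    SatisfiesDecreasingG X ↔
      ∃ (H : X → Set X → Set X) (n : X → X → Set X → ℕ),
        (∀ x U, IsOpen U → x ∈ U → IsOpen (H x U) ∧ x ∈ H x U) ∧
        (∀ a x y U V, IsOpen U → x ∈ U → IsOpen V → y ∈ V →
          a ∈ H x U → a ∈ H y V → n a x U ≤ n a y V → y ∈ U) :=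
  ⟨exists_hn_of_satisfiesDecreasingG, fun ⟨H, n, hH, hn⟩ => satisfiesDecreasingG_of_hn H n hH hn⟩

theorem stmt5 {X : Type*} [TopologicalSpace X] [T1Space X] :
    SatisfiesDecreasingG X ↔
      ∃ (H : X → Set X → Set X) (n : X → X → Set X → ℕ),
        (∀ x U, IsOpen U → x ∈ U → IsOpen (H x U) ∧ x ∈ H x U) ∧
        (∀ a x y U V, IsOpen U → x ∈ U → IsOpen V → y ∈ V →
          a ∈ H x U → a ∈ H y V → n a x U ≤ n a y V → y ∈ U) :=
  stmt5_general
end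

section
/- Every T₁ space satisfying the decreasing (G) condition is a D-space. -/
/-!
Cover `X` by a transfinite greedy recursion: at stage `α` pick a point `x α` not yet covered by the
`φ (x β)`, `β < α`. The recursion cannot run through all ordinals, since its points are distinct;
the kernel is `{x γ | γ < κ}` for the first stage `κ` at which `X` is covered. At a successor
stage `δ + 1` the choice is not free: among the uncovered `y` with `y ∈ W (x δ) m ⊆ φ y`, take
one with `m` least. As `W (x δ)` decreases, `φ (x (δ + 1))` then swallows every such
`W (x δ) m`, so each of these `y` is covered by stage `δ + 2`. Given `a`, let `β` be the first
stage with `a ∈ φ (x β)`, and `V` the neighbourhood of `a` given by (G) for `U = φ a`. A point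
`x γ` of the kernel in `φ (x β) ∩ V` has `γ ≤ β` (it was uncovered when chosen) and
`β < γ + 2` (as `a ∈ W (x γ) m ⊆ φ a`), so only `x β` and `x (β - 1)` lie there. Thus the
kernel is locally finite, hence closed and discrete in a T₁ space.
-/

open Set Topology

universe u_hn

open Filter

theorem isClosed_and_isDiscrete_of_finite_inter_nhds {X : Type*} [TopologicalSpace X]
    [T1Space X] {D : Set X} (h : ∀ x, ∃ O ∈ 𝓝 x, (O ∩ D).Finite) :
    IsClosed D ∧ IsDiscrete D := by
  refine isClosed_and_discrete_iff.2 fun x => ?_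
  obtain ⟨O, hO, hfin⟩ := h x
  have hcompl : (O ∩ D)ᶜ ∈ 𝓝[≠] x := by
    simpa using mem_codiscrete.1 hfin.compl_mem_codiscrete x
  rw [disjoint_principal_right]
  filter_upwards [nhdsWithin_le_nhds hO, hcompl] with y hyO hy hyD using hy ⟨hyO, hyD⟩

theorem Ordinal.eq_or_eq_pred_of_le_of_lt_add_one_add_one {β γ : Ordinal} (hγβ : γ ≤ β)
    (hβγ : β < γ + 1 + 1) : γ = β ∨ γ = Ordinal.pred β := by
  rcases hγβ.eq_or_lt with h | h
  · exact Or.inl h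
  · have : β = γ + 1 := le_antisymm (Order.lt_add_one_iff.1 hβγ) (Order.add_one_le_of_lt h)
    exact Or.inr (by rw [this, Ordinal.pred_add_one])

namespace DecreasingG

universe u

variable {X : Type u} (W : X → ℕ → Set X) (φ : X → Set X)

def IsGreedyChoice (G : Set X) (z y : X) : Prop :=
  y ∉ G ∧ ∀ m, ∀ y' ∉ G, y' ∈ W z m → W z m ⊆ φ y' → W z m ⊆ φ y

variable {W φ}

theorem exists_isGreedyChoice (hW : ∀ z, Antitone (W z)) {G : Set X} (hG : G ≠ univ) (z : X) :
    ∃ y, IsGreedyChoice W φ G z y := by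
  classical
  by_cases hcap : ∃ m, ∃ y ∉ G, y ∈ W z m ∧ W z m ⊆ φ y
  · obtain ⟨y, hyG, -, hyφ⟩ := Nat.find_spec hcap
    exact ⟨y, hyG, fun m y' hy'G hy'W hy'φ =>
      (hW z (Nat.find_min' hcap ⟨y', hy'G, hy'W, hy'φ⟩)).trans hyφ⟩
  · push Not at hcap
    obtain ⟨y, hy⟩ := (ne_univ_iff_exists_notMem G).1 hG
    exact ⟨y, hy, fun m y' hy'G hy'W hy'φ => absurd hy'φ (hcap m y' hy'G hy'W)⟩

variable (W φ) [Nonempty X]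

/-- `Ordinal.pred α < α` exactly when `α` is a successor; at limit stages the chain to capture is
irrelevant and that of an arbitrary point is used. -/
noncomputable def greedySeq : Ordinal.{u} → X :=
  Ordinal.lt_wf.fix fun α prior =>
    Classical.epsilon <| IsGreedyChoice W φ (⋃ (β) (h : β < α), φ (prior β h))
      (if h : Ordinal.pred α < α then prior _ h else Classical.arbitrary X)

def covered (α : Ordinal.{u}) : Set X :=
  ⋃ β < α, φ (greedySeq W φ β)

variable {W φ}

theorem covered_mono : Monotone (covered W φ) := fun _ _ h =>
  biUnion_mono (fun _ (hβ : _ < _) => hβ.trans_le h) fun _ _ => subset_rfl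

theorem subset_covered {β α : Ordinal.{u}} (h : β < α) :
    φ (greedySeq W φ β) ⊆ covered W φ α :=
  subset_biUnion_of_mem (u := fun β => φ (greedySeq W φ β)) h

theorem greedySeq_eq (α : Ordinal.{u}) :
    greedySeq W φ α = Classical.epsilon (IsGreedyChoice W φ (covered W φ α)
      (if Ordinal.pred α < α then greedySeq W φ (Ordinal.pred α) else Classical.arbitrary X)) :=
  Ordinal.lt_wf.fix_eq _ α

theorem isGreedyChoice_greedySeq (hW : ∀ z, Antitone (W z)) {α : Ordinal.{u}}
    (hα : covered W φ α ≠ univ) :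
    IsGreedyChoice W φ (covered W φ α)
      (if Ordinal.pred α < α then greedySeq W φ (Ordinal.pred α) else Classical.arbitrary X)
      (greedySeq W φ α) := by
  rw [greedySeq_eq α]
  exact Classical.epsilon_spec (exists_isGreedyChoice hW hα _)

theorem greedySeq_notMem_covered (hW : ∀ z, Antitone (W z)) {α : Ordinal.{u}}
    (hα : covered W φ α ≠ univ) : greedySeq W φ α ∉ covered W φ α :=
  (isGreedyChoice_greedySeq hW hα).1

theorem greedySeq_notMem_of_lt (hW : ∀ z, Antitone (W z)) {β γ : Ordinal.{u}}
    (hγ : covered W φ γ ≠ univ) (hβγ : β < γ) : greedySeq W φ γ ∉ φ (greedySeq W φ β) :=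
  fun h => greedySeq_notMem_covered hW hγ (subset_covered hβγ h)

theorem mem_covered_add_one_add_one (hW : ∀ z, Antitone (W z)) {δ : Ordinal.{u}} {m : ℕ} {y : X}
    (hyW : y ∈ W (greedySeq W φ δ) m) (hyφ : W (greedySeq W φ δ) m ⊆ φ y) :
    y ∈ covered W φ (δ + 1 + 1) := by
  by_contra hy
  have hy' : y ∉ covered W φ (δ + 1) := fun h => hy (covered_mono (le_add_right le_rfl) h)
  have hchoice := isGreedyChoice_greedySeq hW (ne_univ_iff_exists_notMem _ |>.2 ⟨y, hy'⟩)
  rw [Ordinal.pred_add_one, if_pos (lt_add_one δ)] at hchoice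
  exact hy (subset_covered (lt_add_one _) (hchoice.2 m y hy' hyW hyφ hyW))

theorem exists_covered_eq_univ (hW : ∀ z, Antitone (W z)) (hφ : ∀ x, x ∈ φ x) :
    ∃ α, covered W φ α = univ := by
  by_contra! hcov
  refine not_injective_of_ordinal (greedySeq W φ) fun β γ hβγ => ?_
  by_contra hne
  rcases lt_or_gt_of_ne hne with h | h
  · exact greedySeq_notMem_of_lt hW (hcov γ) h (hβγ ▸ hφ _)
  · exact greedySeq_notMem_of_lt hW (hcov β) h (hβγ ▸ hφ _)

theorem finite_inter_image_greedySeq [TopologicalSpace X] (hW : ∀ z, Antitone (W z))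
    (hφo : ∀ x, IsOpen (φ x))
    (hV : ∀ a, ∀ᶠ y in 𝓝 a, ∃ m, a ∈ W y m ∧ W y m ⊆ φ a) {κ : Ordinal.{u}}
    (hκ : covered W φ κ = univ) (hmin : ∀ γ < κ, covered W φ γ ≠ univ) (a : X) :
    ∃ O ∈ 𝓝 a, (O ∩ greedySeq W φ '' Iio κ).Finite := by
  obtain ⟨β₁, -, haβ₁⟩ := mem_iUnion₂.1 (hκ ▸ mem_univ a : a ∈ covered W φ κ)
  obtain ⟨β, haβ, hβmin⟩ :=
    Ordinal.lt_wf.has_min {β | a ∈ φ (greedySeq W φ β)} ⟨β₁, haβ₁⟩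
  have ha_notMem : a ∉ covered W φ β := fun h =>
    let ⟨γ, hγ, h⟩ := mem_iUnion₂.1 h
    hβmin γ h hγ
  refine ⟨φ (greedySeq W φ β) ∩ {y | ∃ m, a ∈ W y m ∧ W y m ⊆ φ a},
    inter_mem ((hφo _).mem_nhds haβ) (hV a),
    (toFinite {greedySeq W φ β, greedySeq W φ (Ordinal.pred β)}).subset ?_⟩
  rintro _ ⟨⟨hφβ, m, haW, hWφ⟩, γ, hγκ, rfl⟩
  have hγβ : γ ≤ β := not_lt.1 fun h => greedySeq_notMem_of_lt hW (hmin γ hγκ) h hφβ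
  have hβγ : β < γ + 1 + 1 :=
    not_le.1 fun h => ha_notMem (covered_mono h (mem_covered_add_one_add_one hW haW hWφ))
  rcases Ordinal.eq_or_eq_pred_of_le_of_lt_add_one_add_one hγβ hβγ with rfl | rfl
  · exact mem_insert _ _
  · exact mem_insert_of_mem _ rfl

end DecreasingG

open DecreasingG in
theorem stmt7 {X : Type*} [TopologicalSpace X] [T1Space X]
    (h : SatisfiesDecreasingG X) : IsDSpace X := by
  obtain ⟨W, -, hWdec, hWnhds⟩ := h
  intro φ hφo hφm
  rcases isEmpty_or_nonempty X with hX | hX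
  · exact ⟨∅, isClosed_empty, inferInstance, Subsingleton.elim _ _⟩
  have hW : ∀ z, Antitone (W z) := fun z => antitone_nat_of_succ_le (hWdec z)
  have hV : ∀ a, ∀ᶠ y in 𝓝 a, ∃ m, a ∈ W y m ∧ W y m ⊆ φ a := fun a =>
    let ⟨V, hVo, haV, hV⟩ := hWnhds a (φ a) (hφo a) (hφm a)
    eventually_of_mem (hVo.mem_nhds haV) hV
  obtain ⟨κ, hκ, hmin⟩ := Ordinal.lt_wf.has_min {α | covered W φ α = univ}
    (exists_covered_eq_univ hW hφm)
  obtain ⟨hclosed, hdiscrete⟩ := isClosed_and_isDiscrete_of_finite_inter_nhds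
    (finite_inter_image_greedySeq hW hφo hV hκ fun γ hγ h => hmin γ h hγ)
  exact ⟨_, hclosed, hdiscrete.to_subtype, by rw [biUnion_image]; exact hκ⟩
end

section
/- There exists a T₁ space satisfying the chain (F) condition that is not a D-space. -/
open Set Topology

universe u_hn

/-! In `[0, ω₁)` every `Iic x` is open, since `Iic x = Iio (succ x)`. Hence
`W y = {[y, b] | y ≤ b}` witnesses chain (F): for `y ≤ x` close enough to `x`, the interval
`[y, x]` lies in a given neighbourhood of `x`. The assignment `x ↦ Iic x` has no closed discrete
kernel `D`: `D` would be cofinal, so it contains a strictly increasing sequence, which is bounded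
because `ω₁` has uncountable cofinality; its supremum lies in the closed set `D` but is a limit
of other points of `D`. -/

open Ordinal Cardinal

theorem IsCofinal.exists_strictMono_nat {α : Type*} [Preorder α] [Nonempty α] [NoMaxOrder α]
    {D : Set α} (hD : IsCofinal D) : ∃ f : ℕ → α, StrictMono f ∧ ∀ n, f n ∈ D := by
  have hgt : ∀ a, ∃ d ∈ D, a < d := fun a =>
    let ⟨b, hab⟩ := exists_gt a
    let ⟨d, hd, hbd⟩ := hD b
    ⟨d, hd, hab.trans_le hbd⟩
  choose g hgD hg using hgt
  refine ⟨fun n => g^[n + 1] (Classical.arbitrary α), strictMono_nat_of_lt_succ fun n => ?_,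
    fun n => ?_⟩
  · rw [Function.iterate_succ_apply' g (n + 1)]; exact hg _
  · show g^[n + 1] _ ∈ D
    rw [Function.iterate_succ_apply']; exact hgD _

theorem Set.Countable.bddAbove_of_aleph0_lt_cof {α : Type*} [LinearOrder α] [NoMaxOrder α]
    (hcof : ℵ₀ < Order.cof α) {s : Set α} (hs : s.Countable) : BddAbove s :=
  not_isCofinal_iff_bddAbove.1 fun h =>
    ((Order.cof_le h).trans (mk_le_aleph0_iff.2 hs.to_subtype)).not_gt hcof

variable {α : Type*} [LinearOrder α] [TopologicalSpace α] [OrderTopology α]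

theorem isOpen_Iic_of_wellFoundedLT [WellFoundedLT α] (a : α) : IsOpen (Iic a) := by
  let := SuccOrder.ofLinearWellFoundedLT α
  by_cases ha : IsMax a
  · rw [ha.isTop.Iic_eq]; exact isOpen_univ
  · rw [← Order.Iio_succ_of_not_isMax ha]; exact isOpen_Iio

theorem satisfiesChainF_of_isOpen_Iic (hIic : ∀ a : α, IsOpen (Iic a)) : SatisfiesChainF α := by
  refine ⟨fun y => Icc y '' Ici y, fun y => ?_, ?_, ?_⟩
  · exact Monotone.isChain_image (f := Icc y) (fun _ _ => Icc_subset_Icc_right)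
      (isChain_of_trichotomous _)
  · rintro y _ ⟨b, hyb, rfl⟩
    exact ⟨le_rfl, hyb⟩
  · intro x U hU hxU
    have hIcc : ∀ᶠ y in 𝓝 x, Icc y x ⊆ U :=
      (Filter.tendsto_id.Icc tendsto_const_nhds).eventually
        (Filter.eventually_smallSets_subset.2 (hU.mem_nhds hxU))
    obtain ⟨V, hV, hVo, hxV⟩ := eventually_nhds_iff.1 (hIcc.and ((hIic x).mem_nhds le_rfl))
    exact ⟨V, hVo, hxV, fun y hy =>
      ⟨Icc y x, ⟨x, (hV y hy).2, rfl⟩, right_mem_Icc.2 (hV y hy).2, (hV y hy).1⟩⟩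

theorem IsClosed.not_discreteTopology_of_isLUB {D : Set α} (hD : IsClosed D) {f : ℕ → α}
    (hf : StrictMono f) (hfD : ∀ n, f n ∈ D) {x : α} (hx : IsLUB (range f) x) :
    ¬ DiscreteTopology D := by
  intro hdisc
  have hx_closure : x ∈ closure (range f) := hx.mem_closure (range_nonempty f)
  have hxD : x ∈ D := hD.closure_subset_iff.2 (range_subset_iff.2 hfD) hx_closure
  obtain ⟨U, hU, hUD⟩ := discreteTopology_subtype_iff'.1 hdisc x hxD
  have hxU : x ∈ U := (hUD.symm.subset rfl).1
  obtain ⟨_, hfU, n, rfl⟩ := mem_closure_iff.1 hx_closure U hU hxU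
  have hfx : f n = x := hUD.subset ⟨hfU, hfD n⟩
  exact (hfx ▸ hf n.lt_succ_self).not_ge (hx.1 ⟨n + 1, rfl⟩)

theorem not_isDSpace_of_aleph0_lt_cof [WellFoundedLT α] (hcof : ℵ₀ < Order.cof α) :
    ¬ IsDSpace α := by
  have : Nonempty α := Order.cof_ne_zero_iff.1 (aleph0_pos.trans hcof).ne'
  have : NoTopOrder α := Order.one_lt_cof_iff.1 (one_lt_aleph0.trans hcof)
  have : NoMaxOrder α := ⟨fun a => (exists_not_le a).imp fun _ => not_le.1⟩
  intro hD
  obtain ⟨D, hDclosed, hDdiscrete, hDcover⟩ :=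
    hD Iic isOpen_Iic_of_wellFoundedLT fun _ => le_rfl
  obtain ⟨f, hf, hfD⟩ := (isCofinal_iff_iUnion_Iic_eq_univ.2 hDcover).exists_strictMono_nat
  have hub : (upperBounds (range f)).Nonempty :=
    (countable_range f).bddAbove_of_aleph0_lt_cof hcof
  have hx : IsLUB (range f) (wellFounded_lt.min _ hub) :=
    ⟨wellFounded_lt.min_mem _ hub, fun _ hb => wellFounded_lt.min_le hb⟩
  exact hDclosed.not_discreteTopology_of_isLUB hf hfD hx hDdiscrete

theorem stmt14 :
    ∃ (X : Type 1) (_ : TopologicalSpace X), T1Space X ∧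
      SatisfiesChainF X ∧ ¬ IsDSpace X :=
  ⟨Iio (ω₁ : Ordinal.{0}), inferInstance, inferInstance,
    satisfiesChainF_of_isOpen_Iic isOpen_Iic_of_wellFoundedLT,
    not_isDSpace_of_aleph0_lt_cof (by simp [Ordinal.cof_Iio])⟩
end

section
/- An open subspace of a T₁ space satisfying the well-ordered (F) condition also satisfies the well-ordered (F) condition. -/
open Set Topology

universe u_hn

theorem isWellOrder_gt_image_of_monotone {α β : Type*} [PartialOrder α] [PartialOrder β]
    {s : Set α} (hs : IsWellOrder s (fun a b => (b : α) < a)) {f : α → β} (hf : Monotone f) :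
    IsWellOrder (f '' s) (fun a b => (b : β) < a) := by
  have total : ∀ a b : s, (a : α) ≤ b ∨ (b : α) ≤ a := fun a b => by
    rcases trichotomous_of (fun a b : s => (b : α) < a) a b with h | h | h
    · exact .inr h.le
    · exact .inl (congrArg Subtype.val h).le
    · exact .inl h.le
  have hsec : ∀ y : f '' s, ∃ a : s, f a = y := fun ⟨_, a, ha, hy⟩ => ⟨⟨a, ha⟩, hy⟩
  choose g hg using hsec
  have hfg_le : ∀ x y, (g x : α) ≤ g y → (x : β) ≤ y := fun x y h => hg x ▸ hg y ▸ hf h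
  have : Std.Trichotomous (fun a b : f '' s => (b : β) < a) := ⟨fun x y hyx hxy => by
    rcases total (g x) (g y) with h | h
    · exact Subtype.ext (eq_of_le_of_not_lt (hfg_le x y h) hxy)
    · exact Subtype.ext (eq_of_le_of_not_lt (hfg_le y x h) hyx).symm⟩
  -- the section `g` of `f` reflects `<` because `s` is a chain
  have : IsWellFounded _ (fun a b : f '' s => (b : β) < a) := by
    refine ⟨Subrelation.wf (fun {x y} hyx => ?_) (InvImage.wf g hs.wf)⟩
    show (g y : α) < g x
    rcases total (g x) (g y) with h | h
    · exact absurd (hfg_le x y h) hyx.not_ge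
    · exact lt_of_le_of_ne h fun he => hyx.ne (by rw [← hg x, ← hg y, Subtype.ext he])
  exact {}

theorem FFamilyCondition.comap {X Y : Type*} [TopologicalSpace X] [TopologicalSpace Y]
    {W : X → Set (Set X)} (hW : FFamilyCondition W) {f : Y → X} (hf : IsOpenEmbedding f) :
    FFamilyCondition fun y => preimage f '' W (f y) := by
  refine ⟨fun y _ ⟨w, hw, hwy⟩ => hwy ▸ hW.1 (f y) w hw, fun y V hV hyV => ?_⟩
  obtain ⟨G, hG, hyG, hGw⟩ := hW.2 (f y) (f '' V) (hf.isOpenMap V hV) (mem_image_of_mem f hyV)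
  refine ⟨f ⁻¹' G, hG.preimage hf.continuous, hyG, fun z hz => ?_⟩
  obtain ⟨w, hw, hyw, hwV⟩ := hGw (f z) hz
  exact ⟨f ⁻¹' w, mem_image_of_mem _ hw, hyw,
    (preimage_mono hwV).trans (preimage_image_eq V hf.injective).le⟩

theorem SatisfiesWellOrderedF.of_isOpenEmbedding {X Y : Type*} [TopologicalSpace X]
    [TopologicalSpace Y] (h : SatisfiesWellOrderedF X) {f : Y → X} (hf : IsOpenEmbedding f) :
    SatisfiesWellOrderedF Y := by
  obtain ⟨W, hWO, hWF⟩ := h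
  exact ⟨_, fun y => isWellOrder_gt_image_of_monotone (hWO (f y)) fun _ _ => preimage_mono,
    hWF.comap hf⟩

theorem stmt16_general {X : Type*} [TopologicalSpace X]
    (h : SatisfiesWellOrderedF X) (U : Set X) (hU : IsOpen U) :
    SatisfiesWellOrderedF U :=
  h.of_isOpenEmbedding hU.isOpenEmbedding_subtypeVal

theorem stmt16 {X : Type*} [TopologicalSpace X] [T1Space X]
    (h : SatisfiesWellOrderedF X) (U : Set X) (hU : IsOpen U) :
    SatisfiesWellOrderedF U :=
  stmt16_general h U hU
end
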